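/- Let U ⊆ X be open convex and f ∈ C^{1u}(U,Y). If f′ takes U-bounded weakly p-precompact subsets of U into uniformly p-convergent subsets of L(X,Y), then f is weakly p-sequentially continuous: f maps U-bounded weakly p-Cauchy sequences of U into norm convergent sequences in Y. -/

import Mathlib

open Filter Topology Metric Set
open scoped ENNReal NNReal

section Defs

variable {X Y : Type*} [NormedAddCommGroup X] [NormedSpace ℝ X]
  [NormedAddCommGroup Y] [NormedSpace ℝ Y]

/-- A sequence `(x n)` in `X` is weakly `p`-summable if `(f (x n))ₙ ∈ ℓ_p` for every
continuous linear functional `f` (for `p = ∞`, this means `(f (x n))ₙ ∈ c₀`). -/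
def WeaklyLpSummable (p : ℝ≥0∞) (x : ℕ → X) : Prop :=
  ∀ f : X →L[ℝ] ℝ,
    if p = ⊤ then Filter.Tendsto (fun n => f (x n)) Filter.atTop (nhds 0)
    else Memℓp (fun n => f (x n)) p

/-- A sequence is weakly `p`-Cauchy if all difference sequences along pairs of strictly
monotone index sequences are weakly `p`-summable. -/
def WeaklyLpCauchy (p : ℝ≥0∞) (x : ℕ → X) : Prop :=
  ∀ m k : ℕ → ℕ, StrictMono m → StrictMono k →
    WeaklyLpSummable p (fun i => x (m i) - x (k i))

/-- `(x n)` is weakly `p`-convergent to `x₀` if `(x n - x₀)` is weakly `p`-summable. -/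
def WeaklyLpConvergentTo (p : ℝ≥0∞) (x : ℕ → X) (x₀ : X) : Prop :=
  WeaklyLpSummable p (fun n => x n - x₀)

/-- A set `K ⊆ L(X,Y)` is uniformly `p`-convergent if `lim_n sup_{T ∈ K} ‖T (x n)‖ = 0`
for every weakly `p`-summable sequence `(x n)`. -/
def UniformlyPConvergent (p : ℝ≥0∞) (K : Set (X →L[ℝ] Y)) : Prop :=
  ∀ x : ℕ → X, WeaklyLpSummable p x →
    ∀ ε > 0, ∃ N : ℕ, ∀ n ≥ N, ∀ T ∈ K, ‖T (x n)‖ < ε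

/-- `B` is `U`-bounded: contained in `U`, bounded, and at positive distance from `∂U`. -/
def UBounded (U B : Set X) : Prop :=
  B ⊆ U ∧ Bornology.IsBounded B ∧ ∃ r > 0, ∀ b ∈ B, Metric.ball b r ⊆ U

/-- A sequence is `U`-bounded if its range is a `U`-bounded set. -/
def UBoundedSeq (U : Set X) (x : ℕ → X) : Prop :=
  UBounded U (Set.range x)

/-- `f ∈ C^{1u}(U,Y)`: `f` is differentiable on `U` with derivative `f'` which is
uniformly continuous on `U`-bounded subsets of `U`. -/
def C1u (U : Set X) (f : X → Y) (f' : X → X →L[ℝ] Y) : Prop :=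
  (∀ x ∈ U, HasFDerivAt f (f' x) x) ∧
  ∀ B : Set X, UBounded U B → UniformContinuousOn f' B

/-- `T` is a `p`-convergent operator: it maps weakly `p`-summable sequences to norm-null
sequences. -/
def PConvergentOp (p : ℝ≥0∞) (T : X →L[ℝ] Y) : Prop :=
  ∀ x : ℕ → X, WeaklyLpSummable p x →
    Filter.Tendsto (fun n => ‖T (x n)‖) Filter.atTop (nhds 0)

/-- `f` is weakly `p`-sequentially continuous on `U`: it maps `U`-bounded weakly
`p`-Cauchy sequences to norm convergent sequences. -/
def WeaklyPSeqCont (p : ℝ≥0∞) (U : Set X) (f : X → Y) : Prop :=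
  ∀ x : ℕ → X, UBoundedSeq U x → WeaklyLpCauchy p x →
    ∃ l : Y, Filter.Tendsto (fun n => f (x n)) Filter.atTop (nhds l)

/-- `K` is weakly `p`-precompact: every sequence in `K` has a weakly `p`-Cauchy
subsequence. -/
def WeaklyPPrecompact (p : ℝ≥0∞) (K : Set X) : Prop :=
  ∀ x : ℕ → X, (∀ n, x n ∈ K) →
    ∃ m : ℕ → ℕ, StrictMono m ∧ WeaklyLpCauchy p (fun i => x (m i))

end Defs

/-!
Let `(xₙ)` be `U`-bounded and weakly `p`-Cauchy, and let `m, k` be strictly increasing. By the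
mean value theorem there are points `cᵢ` on the segments `[x_{kᵢ}, x_{mᵢ}]` with
`‖f x_{mᵢ} - f x_{kᵢ}‖ ≤ ‖f' cᵢ (x_{mᵢ} - x_{kᵢ})‖ + 1/(i+1)`. The sequence `(cᵢ)` is again
weakly `p`-Cauchy and its range lies in the convex hull of the range of `(xₙ)`, so it is
`U`-bounded and weakly `p`-precompact. Hence `f' '' range c` is uniformly `p`-convergent, and
applied to the weakly `p`-summable differences `x_{mᵢ} - x_{kᵢ}` this forces
`‖f x_{mᵢ} - f x_{kᵢ}‖ → 0`. So `(f xₙ)` is Cauchy, and converges as `Y` is complete.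
-/

theorem Memℓp.comp_injective {α β E : Type*} [NormedAddCommGroup E] {p : ℝ≥0∞} {f : α → E}
    (hf : Memℓp f p) {e : β → α} (he : Function.Injective e) : Memℓp (f ∘ e) p := by
  obtain rfl | rfl | hp := p.trichotomy
  · rw [memℓp_zero_iff] at hf ⊢
    exact hf.preimage he.injOn
  · rw [memℓp_infty_iff] at hf ⊢
    exact hf.mono (range_comp_subset_range e fun i => ‖f i‖)
  · rw [memℓp_gen_iff hp] at hf ⊢
    exact hf.comp_injective he

theorem Nat.exists_strictMono_subseq_strictMono_or_const (φ : ℕ → ℕ) :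
    ∃ σ : ℕ → ℕ, StrictMono σ ∧ (StrictMono (φ ∘ σ) ∨ ∃ v, ∀ n, φ (σ n) = v) := by
  by_cases hrep : ∃ v, ∃ᶠ n in atTop, φ n = v
  · obtain ⟨v, hv⟩ := hrep
    obtain ⟨σ, hσ, hσv⟩ := extraction_of_frequently_atTop hv
    exact ⟨σ, hσ, Or.inr ⟨v, hσv⟩⟩
  · push Not at hrep
    have hφ : Tendsto φ atTop atTop := tendsto_atTop.2 fun b =>
      ((eventually_all_finset (Finset.range b)).2 fun v _ => hrep v).mono
        fun n hn => not_lt.1 fun hlt => hn _ (Finset.mem_range.2 hlt) rfl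
    obtain ⟨σ, hσ, hφσ⟩ := strictMono_subseq_of_tendsto_atTop hφ
    exact ⟨σ, hσ, Or.inl hφσ⟩

theorem cauchySeq_of_forall_strictMono_tendsto_dist {α : Type*} [PseudoMetricSpace α]
    {u : ℕ → α} (h : ∀ m k : ℕ → ℕ, StrictMono m → StrictMono k →
      Tendsto (fun i => dist (u (m i)) (u (k i))) atTop (𝓝 0)) :
    CauchySeq u := by
  rw [Metric.cauchySeq_iff']
  by_contra! hu
  obtain ⟨ε, hε, hfar⟩ := hu
  choose n hn hdist using hfar
  obtain ⟨σ, hσ, hnσ⟩ := strictMono_subseq_of_tendsto_atTop (tendsto_atTop_mono hn tendsto_id)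
  obtain ⟨i, hi⟩ := ((h _ _ hnσ hσ).eventually (gt_mem_nhds hε)).exists
  exact (hdist (σ i)).not_gt hi

theorem Convex.exists_lt_norm_fderiv_apply_of_lt_norm_sub {X Y : Type*}
    [NormedAddCommGroup X] [NormedSpace ℝ X] [NormedAddCommGroup Y] [NormedSpace ℝ Y]
    {U : Set X} (hU : Convex ℝ U) {f : X → Y} {f' : X → X →L[ℝ] Y}
    (hf : ∀ x ∈ U, HasFDerivAt f (f' x) x) {a b : X} (ha : a ∈ U) (hb : b ∈ U) {C : ℝ}
    (hC : C < ‖f b - f a‖) :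
    ∃ t ∈ Icc (0 : ℝ) 1, C < ‖f' (AffineMap.lineMap a b t) (b - a)‖ := by
  by_contra! hle
  have hder : ∀ t ∈ Icc (0 : ℝ) 1, HasDerivWithinAt (f ∘ AffineMap.lineMap a b)
      (f' (AffineMap.lineMap a b t) (b - a)) (Icc 0 1) t := fun t ht =>
    ((hf _ (hU.lineMap_mem ha hb ht)).comp_hasDerivAt t
      AffineMap.hasDerivAt_lineMap).hasDerivWithinAt
  have := norm_image_sub_le_of_norm_deriv_le_segment' hder
    (fun t ht => hle t (Ico_subset_Icc_self ht)) 1 (right_mem_Icc.2 zero_le_one)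
  simp only [Function.comp_apply, AffineMap.lineMap_apply_one, AffineMap.lineMap_apply_zero,
    sub_zero, mul_one] at this
  linarith

section WeaklySummable

variable {X : Type*} [NormedAddCommGroup X] [NormedSpace ℝ X] {p : ℝ≥0∞} {x y : ℕ → X}

theorem weaklyLpSummable_zero (p : ℝ≥0∞) : WeaklyLpSummable p (fun _ : ℕ => (0 : X)) := by
  intro f
  split_ifs
  · simpa only [map_zero] using tendsto_const_nhds
  · simpa only [map_zero] using zero_mem_ℓp'

theorem WeaklyLpSummable.add (hx : WeaklyLpSummable p x) (hy : WeaklyLpSummable p y) :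
    WeaklyLpSummable p (fun n => x n + y n) := by
  intro f
  have hx := hx f
  have hy := hy f
  simp only [map_add]
  split_ifs at hx hy ⊢
  · simpa only [add_zero] using hx.add hy
  · exact hx.add hy

theorem WeaklyLpSummable.smul (hx : WeaklyLpSummable p x) {t : ℕ → ℝ} {C : ℝ}
    (ht : ∀ n, |t n| ≤ C) : WeaklyLpSummable p (fun n => t n • x n) := by
  intro f
  have hle : ∀ n, ‖f (t n • x n)‖ ≤ ‖C * f (x n)‖ := fun n => by
    rw [map_smul, smul_eq_mul, norm_mul, norm_mul, Real.norm_eq_abs, Real.norm_eq_abs]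
    gcongr
    exact (ht n).trans (le_abs_self C)
  have hx := hx f
  split_ifs at hx ⊢
  · exact squeeze_zero_norm hle (by simpa only [mul_zero, norm_zero] using (hx.const_mul C).norm)
  · exact (hx.const_mul C).mono' hle

theorem WeaklyLpSummable.comp_strictMono (hx : WeaklyLpSummable p x) {ψ : ℕ → ℕ}
    (hψ : StrictMono ψ) : WeaklyLpSummable p (fun n => x (ψ n)) := by
  intro f
  have hx := hx f
  split_ifs at hx ⊢
  · exact hx.comp hψ.tendsto_atTop
  · exact hx.comp_injective hψ.injective

theorem weaklyLpCauchy_const (p : ℝ≥0∞) (a : X) : WeaklyLpCauchy p (fun _ : ℕ => a) :=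
  fun _ _ _ _ => by simpa only [sub_self] using weaklyLpSummable_zero p

theorem WeaklyLpCauchy.comp_strictMono (hx : WeaklyLpCauchy p x) {ψ : ℕ → ℕ}
    (hψ : StrictMono ψ) : WeaklyLpCauchy p (fun n => x (ψ n)) :=
  fun m k hm hk => hx (ψ ∘ m) (ψ ∘ k) (hψ.comp hm) (hψ.comp hk)

theorem WeaklyLpCauchy.lineMap (hx : WeaklyLpCauchy p x) {m k : ℕ → ℕ} (hm : StrictMono m)
    (hk : StrictMono k) {t : ℕ → ℝ} {C : ℝ} (ht : ∀ i, |t i| ≤ C) :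
    WeaklyLpCauchy p (fun i => AffineMap.lineMap (x (k i)) (x (m i)) (t i)) := by
  intro m' k' hm' hk'
  have hv := hx m k hm hk
  have hsum := (hx _ _ (hk.comp hm') (hk.comp hk')).add
    (((hv.comp_strictMono hm').smul fun i => ht (m' i)).add
      ((hv.comp_strictMono hk').smul (t := fun i => -t (k' i))
        fun i => (abs_neg _).trans_le (ht _)))
  convert hsum using 2 with i
  simp only [AffineMap.lineMap_apply_module', Function.comp_apply, neg_smul]
  abel

theorem WeaklyLpCauchy.weaklyPPrecompact_range (hx : WeaklyLpCauchy p x) :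
    WeaklyPPrecompact p (range x) := by
  intro y hy
  choose φ hφ using hy
  obtain ⟨σ, hσ, hφσ | ⟨v, hv⟩⟩ := Nat.exists_strictMono_subseq_strictMono_or_const φ
  · refine ⟨σ, hσ, ?_⟩
    simpa only [← hφ, Function.comp_apply] using hx.comp_strictMono hφσ
  · refine ⟨σ, hσ, ?_⟩
    simpa only [← hφ, hv] using weaklyLpCauchy_const p (x v)

end WeaklySummable

section UBounded

open scoped Pointwise

variable {X : Type*} [NormedAddCommGroup X] {U B B' : Set X}

theorem UBounded.mono (hB : UBounded U B) (h : B' ⊆ B) : UBounded U B' := by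
  obtain ⟨hBU, hbdd, r, hr, hball⟩ := hB
  exact ⟨h.trans hBU, hbdd.subset h, r, hr, fun b hb => hball b (h hb)⟩

theorem UBounded.convexHull [NormedSpace ℝ X] (hU : Convex ℝ U) (hB : UBounded U B) :
    UBounded U (convexHull ℝ B) := by
  obtain ⟨hBU, hbdd, r, hr, hball⟩ := hB
  refine ⟨convexHull_min hBU hU, isBounded_convexHull.2 hbdd, r, hr, fun c hc z hz => ?_⟩
  have hthick : B + ball (0 : X) r ⊆ U := by
    rintro _ ⟨b, hb, w, hw, rfl⟩
    rw [mem_ball_zero_iff] at hw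
    exact hball b hb (by rwa [mem_ball, dist_eq_norm, add_sub_cancel_left])
  have hz : z ∈ _root_.convexHull ℝ B + ball (0 : X) r :=
    ⟨c, hc, z - c, by rwa [mem_ball_zero_iff, ← dist_eq_norm], add_sub_cancel c z⟩
  rw [← (convex_ball (0 : X) r).convexHull_eq, ← convexHull_add] at hz
  exact convexHull_min hthick hU hz

end UBounded

theorem UniformlyPConvergent.tendsto_norm_apply {X Y : Type*}
    [NormedAddCommGroup X] [NormedSpace ℝ X] [NormedAddCommGroup Y] [NormedSpace ℝ Y]
    {p : ℝ≥0∞} {K : Set (X →L[ℝ] Y)} (hK : UniformlyPConvergent p K) {v : ℕ → X}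
    (hv : WeaklyLpSummable p v) {T : ℕ → X →L[ℝ] Y} (hT : ∀ n, T n ∈ K) :
    Tendsto (fun n => ‖T n (v n)‖) atTop (𝓝 0) := by
  rw [Metric.tendsto_atTop]
  intro ε hε
  obtain ⟨N, hN⟩ := hK v hv ε hε
  exact ⟨N, fun n hn => by simpa only [Real.dist_eq, sub_zero, abs_norm] using hN n hn _ (hT n)⟩

theorem deriv_uniformlyPConvergent_imp_weaklyPSeqCont_general
    {X Y : Type*} [NormedAddCommGroup X] [NormedSpace ℝ X]
    [NormedAddCommGroup Y] [NormedSpace ℝ Y] [CompleteSpace Y]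
    (p : ℝ≥0∞)
    (U : Set X) (hUc : Convex ℝ U)
    (f : X → Y) (f' : X → X →L[ℝ] Y) (hf : C1u U f f')
    (H : ∀ K : Set X, UBounded U K → WeaklyPPrecompact p K →
      UniformlyPConvergent p (f' '' K)) :
    WeaklyPSeqCont p U f := by
  intro x hx hxC
  refine cauchySeq_tendsto_of_complete
    (cauchySeq_of_forall_strictMono_tendsto_dist fun m k hm hk => ?_)
  have hxU : ∀ n, x n ∈ U := fun n => hx.1 (mem_range_self n)
  choose t ht hlt using fun i => hUc.exists_lt_norm_fderiv_apply_of_lt_norm_sub hf.1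
    (hxU (k i)) (hxU (m i)) (sub_lt_self _ (Nat.one_div_pos_of_nat (n := i)))
  set c := fun i => AffineMap.lineMap (x (k i)) (x (m i)) (t i)
  have hcU : UBounded U (range c) := (hx.convexHull hUc).mono <| range_subset_iff.2 fun i =>
    segment_subset_convexHull (mem_range_self _) (mem_range_self _)
      (lineMap_mem_segment ℝ _ _ (ht i))
  have hcC : WeaklyLpCauchy p c :=
    hxC.lineMap hm hk fun i => abs_le.2 ⟨by linarith [(ht i).1], (ht i).2⟩
  have hsmall := (H _ hcU hcC.weaklyPPrecompact_range).tendsto_norm_apply (hxC m k hm hk)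
    (T := fun i => f' (c i)) fun i => mem_image_of_mem f' (mem_range_self i)
  refine squeeze_zero (fun _ => dist_nonneg) (fun i => (dist_eq_norm _ _).trans_le ?_)
    (by simpa only [add_zero] using hsmall.add tendsto_one_div_add_atTop_nhds_zero_nat)
  linarith [hlt i]

/-- If `f'` maps `U`-bounded weakly `p`-precompact subsets of `U` into uniformly
`p`-convergent subsets of `L(X,Y)`, then `f` is weakly `p`-sequentially continuous. -/
theorem deriv_uniformlyPConvergent_imp_weaklyPSeqCont
    {X Y : Type*} [NormedAddCommGroup X] [NormedSpace ℝ X] [CompleteSpace X]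
    [NormedAddCommGroup Y] [NormedSpace ℝ Y] [CompleteSpace Y]
    (p : ℝ≥0∞) (hp : 1 ≤ p)
    (U : Set X) (hU : IsOpen U) (hUc : Convex ℝ U)
    (f : X → Y) (f' : X → X →L[ℝ] Y) (hf : C1u U f f')
    (H : ∀ K : Set X, UBounded U K → WeaklyPPrecompact p K →
      UniformlyPConvergent p (f' '' K)) :
    WeaklyPSeqCont p U f :=
  deriv_uniformlyPConvergent_imp_weaklyPSeqCont_general p U hUc f f' hf H
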